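/- arXiv:2311.13679 — 3 statements merged into one kernel-verified Lean document; each statement's English description precedes it below -/
import Mathlib

section
/- Let m ≥ 1 and define h : {−1,1}^{2m} → {−1,1} by h(x) = ∏_{i=1}^m x_i if x_{m+1} = x_{m+2} = ⋯ = x_{2m} = 1, and h(x) = 1 otherwise. Then for every integer t ≥ 1, the Fourier tail of h satisfies W^{≥t}[h] ≤ 2^{1−m}. -/
open scoped Classical

noncomputable section

/-- A `±1` bit, encoded as a unit of `ℤ`. -/
abbrev Bit := ℤˣ

/-- Fourier coefficient `f̂(S) = E_x[f(x) χ_S(x)]`. -/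
def walshCoeff {n : ℕ} (f : (Fin n → Bit) → ℝ) (S : Finset (Fin n)) : ℝ :=
  (∑ x : Fin n → Bit, f x * ∏ i ∈ S, ((x i : ℤ) : ℝ)) / 2 ^ n

/-- The first half `{1, …, m}` of the coordinates of `[2m]`. -/
def firstHalf (m : ℕ) : Finset (Fin (2 * m)) :=
  Finset.univ.filter fun i => (i : ℕ) < m

/-- The "Trojan horse" function: `h(x) = ∏_{i=1}^m x_i` if `x_{m+1} = ⋯ = x_{2m} = 1`,
and `h(x) = 1` otherwise. -/
def trojan (m : ℕ) (x : Fin (2 * m) → Bit) : Bit :=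
  if ∀ i : Fin (2 * m), m ≤ (i : ℕ) → x i = 1 then ∏ i ∈ firstHalf m, x i else 1

end

/-! Subtracting the constant `1` does not change the Fourier coefficients of positive degree,
so by Parseval the tail of `h` is at most `E[(h - 1)²]`. With `A` the first half of the
coordinates and `1_C` the indicator of the subcube `x_{m+1} = ⋯ = x_{2m} = 1`, we have
`h - 1 = (χ_A - 1) 1_C`, hence `(h - 1)² = 2 · 1_C - 2 χ_A 1_C`. Both terms are products of
one-variable functions, so their sums factor over the coordinates: `1_C` sums to `2^m` and
`χ_A 1_C` to a nonnegative number. Thus `E[(h - 1)²] ≤ 2^{m+1} / 2^{2m} = 2^{1-m}`. -/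

open Finset

def walshChar {n : ℕ} (S : Finset (Fin n)) (x : Fin n → Bit) : ℝ :=
  ∏ i ∈ S, ((x i : ℤ) : ℝ)

lemma walshCoeff_eq {n : ℕ} (f : (Fin n → Bit) → ℝ) (S : Finset (Fin n)) :
    walshCoeff f S = (∑ x, f x * walshChar S x) / 2 ^ n := rfl

lemma walshChar_eq_prod_ite {n : ℕ} (S : Finset (Fin n)) (x : Fin n → Bit) :
    walshChar S x = ∏ i, if i ∈ S then ((x i : ℤ) : ℝ) else 1 :=
  (Fintype.prod_ite_mem S _).symm

lemma bit_sq (b : Bit) : ((b : ℤ) : ℝ) ^ 2 = 1 := by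
  rcases Int.units_eq_one_or b with rfl | rfl <;> norm_num

lemma one_add_bit_mul_bit (b c : Bit) :
    1 + ((b : ℤ) : ℝ) * ((c : ℤ) : ℝ) = if b = c then 2 else 0 := by
  rcases Int.units_eq_one_or b with rfl | rfl <;>
    rcases Int.units_eq_one_or c with rfl | rfl <;> norm_num

lemma walshChar_sq {n : ℕ} (S : Finset (Fin n)) (x : Fin n → Bit) : walshChar S x ^ 2 = 1 := by
  simp only [walshChar, ← prod_pow, bit_sq, prod_const_one]

lemma sum_walshChar_eq_zero {n : ℕ} {S : Finset (Fin n)} (hS : S.Nonempty) :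
    ∑ x, walshChar S x = 0 := by
  obtain ⟨j, hj⟩ := hS
  simp_rw [walshChar_eq_prod_ite]
  rw [← Fintype.prod_sum fun i (b : Bit) => if i ∈ S then ((b : ℤ) : ℝ) else 1]
  exact prod_eq_zero (mem_univ j) (by simp [hj])

lemma sum_walshChar_mul_walshChar {n : ℕ} (x y : Fin n → Bit) :
    ∑ S, walshChar S x * walshChar S y = if x = y then 2 ^ n else 0 := by
  simp_rw [walshChar, ← prod_mul_distrib]
  rw [← powerset_univ, ← prod_one_add]
  simp_rw [one_add_bit_mul_bit, Fintype.prod_ite_zero, funext_iff, prod_const, card_univ,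
    Fintype.card_fin]

theorem sum_walshCoeff_sq {n : ℕ} (f : (Fin n → Bit) → ℝ) :
    ∑ S, walshCoeff f S ^ 2 = (∑ x, f x ^ 2) / 2 ^ n := by
  have key : ∑ S, (∑ x, f x * walshChar S x) ^ 2 = 2 ^ n * ∑ x, f x ^ 2 := calc
    _ = ∑ x, ∑ y, f x * f y * ∑ S, walshChar S x * walshChar S y := by
        simp_rw [sq, sum_mul_sum, mul_sum]
        rw [sum_comm]
        refine sum_congr rfl fun x _ => ?_
        rw [sum_comm]
        refine sum_congr rfl fun y _ => sum_congr rfl fun S _ => by ring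
    _ = 2 ^ n * ∑ x, f x ^ 2 := by
        simp only [sum_walshChar_mul_walshChar, mul_ite, mul_zero, sum_ite_eq, mem_univ,
          if_true, mul_sum]
        exact sum_congr rfl fun x _ => by ring
  simp_rw [walshCoeff_eq, div_pow, ← sum_div, key]
  field_simp

lemma walshCoeff_sub_const {n : ℕ} (f : (Fin n → Bit) → ℝ) (c : ℝ) {S : Finset (Fin n)}
    (hS : S.Nonempty) : walshCoeff (fun x => f x - c) S = walshCoeff f S := by
  simp_rw [walshCoeff_eq, sub_mul, sum_sub_distrib, ← mul_sum, sum_walshChar_eq_zero hS,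
    mul_zero, sub_zero]

theorem sum_walshCoeff_sq_filter_le {n : ℕ} (f : (Fin n → Bit) → ℝ) (c : ℝ) {t : ℕ}
    (ht : 1 ≤ t) :
    ∑ S ∈ univ.filter (fun S : Finset (Fin n) => t ≤ S.card), walshCoeff f S ^ 2
      ≤ (∑ x, (f x - c) ^ 2) / 2 ^ n := calc
  _ = ∑ S ∈ univ.filter (fun S : Finset (Fin n) => t ≤ S.card),
        walshCoeff (fun x => f x - c) S ^ 2 :=
      sum_congr rfl fun S hS => by
        rw [walshCoeff_sub_const f c (card_pos.1 (ht.trans (mem_filter.1 hS).2))]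
  _ ≤ ∑ S, walshCoeff (fun x => f x - c) S ^ 2 :=
      sum_le_sum_of_subset_of_nonneg (filter_subset _ _) fun _ _ _ => sq_nonneg _
  _ = _ := sum_walshCoeff_sq _

/-- The indicator of the subcube `{x | ∀ i ∉ A, x i = 1}`, written as a product over the
coordinates so that sums of it factor. -/
def subcubeIndicator {n : ℕ} (A : Finset (Fin n)) (x : Fin n → Bit) : ℝ :=
  ∏ i, if i ∈ A then 1 else if x i = 1 then 1 else 0

lemma subcubeIndicator_eq_ite {n : ℕ} (A : Finset (Fin n)) (x : Fin n → Bit) :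
    subcubeIndicator A x = if ∀ i ∉ A, x i = 1 then 1 else 0 := by
  simp_rw [subcubeIndicator, ← ite_or, Fintype.prod_boole, or_iff_not_imp_left]

lemma subcubeIndicator_sq {n : ℕ} (A : Finset (Fin n)) (x : Fin n → Bit) :
    subcubeIndicator A x ^ 2 = subcubeIndicator A x := by
  rw [subcubeIndicator, ← prod_pow]
  exact prod_congr rfl fun i _ => by split_ifs <;> norm_num

lemma sum_subcubeIndicator {n : ℕ} (A : Finset (Fin n)) :
    ∑ x, subcubeIndicator A x = 2 ^ A.card := by
  have hsum (i : Fin n) : ∑ b : Bit, (if i ∈ A then (1 : ℝ) else if b = 1 then 1 else 0)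
      = if i ∈ A then 2 else 1 := by
    by_cases hi : i ∈ A <;> simp [hi]
  simp_rw [subcubeIndicator]
  rw [← Fintype.prod_sum fun i b => if i ∈ A then 1 else if b = 1 then 1 else 0]
  simp_rw [hsum, Fintype.prod_ite_mem, prod_const]

lemma sum_walshChar_mul_subcubeIndicator_nonneg {n : ℕ} (A : Finset (Fin n)) :
    0 ≤ ∑ x, walshChar A x * subcubeIndicator A x := by
  have hprod (x : Fin n → Bit) : walshChar A x * subcubeIndicator A x
      = ∏ i, if i ∈ A then ((x i : ℤ) : ℝ) else if x i = 1 then 1 else 0 := by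
    rw [walshChar_eq_prod_ite, subcubeIndicator, ← prod_mul_distrib]
    exact prod_congr rfl fun i _ => by split_ifs <;> simp only [mul_one, mul_zero]
  simp_rw [hprod]
  rw [← Fintype.prod_sum fun i (b : Bit) =>
    if i ∈ A then ((b : ℤ) : ℝ) else if b = 1 then 1 else 0]
  exact prod_nonneg fun i _ => by split_ifs <;> simp

lemma sum_sq_walshChar_sub_one_mul_subcubeIndicator_le {n : ℕ} (A : Finset (Fin n)) :
    ∑ x, ((walshChar A x - 1) * subcubeIndicator A x) ^ 2 ≤ 2 ^ (A.card + 1) := by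
  have hsq (x : Fin n → Bit) : ((walshChar A x - 1) * subcubeIndicator A x) ^ 2
      = 2 * subcubeIndicator A x - 2 * (walshChar A x * subcubeIndicator A x) := by
    rw [mul_pow, subcubeIndicator_sq]
    linear_combination subcubeIndicator A x * walshChar_sq A x
  simp_rw [hsq, sum_sub_distrib, ← mul_sum, sum_subcubeIndicator, pow_succ']
  linarith [sum_walshChar_mul_subcubeIndicator_nonneg A]

lemma card_firstHalf (m : ℕ) : (firstHalf m).card = m := by
  rw [firstHalf, Fin.card_filter_val_lt]
  omega

lemma trojan_sub_one (m : ℕ) (x : Fin (2 * m) → Bit) :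
    ((trojan m x : ℤ) : ℝ) - 1
      = (walshChar (firstHalf m) x - 1) * subcubeIndicator (firstHalf m) x := by
  simp only [trojan, subcubeIndicator_eq_ite, firstHalf, mem_filter, mem_univ, true_and, not_lt]
  split_ifs <;> simp [walshChar]

theorem trojan_tail_bound_general (m : ℕ) :
    ∀ t : ℕ, 1 ≤ t →
      (∑ S ∈ Finset.univ.filter (fun S : Finset (Fin (2 * m)) => t ≤ S.card),
          walshCoeff (fun x => ((trojan m x : ℤ) : ℝ)) S ^ 2)
        ≤ (2 : ℝ) ^ ((1 : ℤ) - (m : ℤ)) := by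
  intro t ht
  calc _ ≤ (∑ x, (((trojan m x : ℤ) : ℝ) - 1) ^ 2) / 2 ^ (2 * m) :=
        sum_walshCoeff_sq_filter_le _ 1 ht
    _ ≤ 2 ^ (m + 1) / 2 ^ (2 * m) := by
        gcongr
        simpa only [trojan_sub_one, card_firstHalf] using
          sum_sq_walshChar_sub_one_mul_subcubeIndicator_le (firstHalf m)
    _ = 2 ^ ((1 : ℤ) - (m : ℤ)) := by
        rw [← zpow_natCast, ← zpow_natCast, ← zpow_sub₀ two_ne_zero]
        push_cast
        ring_nf

/-- For every `t ≥ 1`, the Fourier tail of the Trojan horse function satisfies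
`W^{≥t}[h] = ∑_{|S| ≥ t} ĥ(S)² ≤ 2^{1−m}`. -/
theorem trojan_tail_bound (m : ℕ) (hm : 1 ≤ m) :
    ∀ t : ℕ, 1 ≤ t →
      (∑ S ∈ Finset.univ.filter (fun S : Finset (Fin (2 * m)) => t ≤ S.card),
          walshCoeff (fun x => ((trojan m x : ℤ) : ℝ)) S ^ 2)
        ≤ (2 : ℝ) ^ ((1 : ℤ) - (m : ℤ)) :=
  trojan_tail_bound_general m
end

section
/- Let (𝒩, B) be a no-signaling channel from n bits to N bits, let i ∈ [N], and let Y ∈ {−1,1}. (Case 1) If B(i) = ⊥, assume Y is in the support of 𝒩^{{i}}(x) (this support does not depend on x), and define the channel 𝒩' from n bits to N−1 bits by 𝒩'(x) = 𝒩^{[N]∖{i}}(x | y_i = Y). (Case 2) If B(i) = j ∈ [n], fix X ∈ {−1,1}, assume Y is in the support of 𝒩^{{i}} on inputs with x_j = X (this support depends only on x_j), and define the channel 𝒩' from n−1 bits to N−1 bits by 𝒩'(x_{[n]∖{j}}) = 𝒩^{[N]∖{i}}(x | y_i = Y) where x has x_j = X. In either case, define B' on [N]∖{i} by B'(ℓ)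 = ⊥ if B(ℓ) = B(i), and B'(ℓ) = B(ℓ) otherwise. Then (𝒩', B') is a no-signaling channel. -/
open scoped Classical ENNReal

noncomputable section

/-- A channel from `ι`-indexed bit strings to `κ`-indexed bit strings. -/
abbrev Channel (ι κ : Type) : Type := (ι → Bit) → PMF (κ → Bit)

/-- Marginal of a distribution on the cube on the coordinates in `T`. -/
def marg {κ : Type} (p : PMF (κ → Bit)) (T : Finset κ) : PMF ({i // i ∈ T} → Bit) :=
  p.map fun y i => y i.1

/-- The preimage `B⁻¹(S ∪ {⊥})`. -/
def preim {ι κ : Type} [Fintype κ] (B : κ → Option ι) (S : Finset ι) : Finset κ :=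
  Finset.univ.filter fun ℓ => ∀ a, B ℓ = some a → a ∈ S

/-- `(𝒩, B)` is a no-signaling channel: for every `S` and inputs agreeing on `S`, the
marginals of the outputs on `B⁻¹(S ∪ {⊥})` agree. -/
def NoSignaling {ι κ : Type} [Fintype κ] (𝒩 : Channel ι κ) (B : κ → Option ι) : Prop :=
  ∀ (S : Finset ι) (x x' : ι → Bit), (∀ a ∈ S, x a = x' a) →
    marg (𝒩 x) (preim B S) = marg (𝒩 x') (preim B S)


/-- If `Y` is in the support of the marginal of `p` on coordinate `i`, then the event
`{y | y i = Y}` meets the support of `p` (so `p` can be conditioned on it). -/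
lemma filter_ex {κ : Type} (p : PMF (κ → Bit)) (i : κ) (Y : Bit)
    (h : Y ∈ (p.map fun y => y i).support) :
    ∃ y ∈ {y : κ → Bit | y i = Y}, y ∈ p.support := by
  rw [PMF.support_map] at h
  obtain ⟨y, hy, rfl⟩ := h
  exact ⟨y, rfl, hy⟩

/-- Extend `z : {a // a ≠ j} → Bit` to all of `Fin n` by setting coordinate `j` to `X`. -/
def extendAt {n : ℕ} (j : Fin n) (X : Bit) (z : {a : Fin n // a ≠ j} → Bit) : Fin n → Bit :=
  fun a => if h : a = j then X else z ⟨a, h⟩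

end

/-!
Conditioning on an event and then pushing forward along `f` only depends on the image of the
distribution under `f`, provided the event is an `f`-preimage. So if two output distributions
have the same marginal on a light cone `B⁻¹(S ∪ {⊥})` containing `i`, their conditionings on
`y i = Y` still have the same marginal there. A light cone of `B'` for a set `S` of inputs lies
inside the light cone of `B` for `S` when `B i = ⊥`, and for `S ∪ {j}` when `B i = j`; in the
latter case the two inputs agree on `S ∪ {j}` because both have `x_j = X`.
-/

namespace PMF

variable {α β : Type*}

theorem exists_mem_support_map_of_preimage {p : PMF α} {f : α → β} {s : Set β}
    (h : ∃ a ∈ f ⁻¹' s, a ∈ p.support) : ∃ b ∈ s, b ∈ (p.map f).support := by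
  obtain ⟨a, ha, hap⟩ := h
  exact ⟨f a, ha, (p.support_map f).symm ▸ Set.mem_image_of_mem f hap⟩

theorem map_filter_preimage (p : PMF α) (f : α → β) (s : Set β)
    (h : ∃ a ∈ f ⁻¹' s, a ∈ p.support) :
    (p.filter (f ⁻¹' s) h).map f = (p.map f).filter s (exists_mem_support_map_of_preimage h) := by
  have hmass : ∑' b, s.indicator (p.map f) b = ∑' a, (f ⁻¹' s).indicator p a := by
    rw [← toOuterMeasure_apply, ← toOuterMeasure_apply, toOuterMeasure_map_apply]
  ext b
  rw [map_apply, filter_apply, hmass]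
  by_cases hb : b ∈ s
  · rw [Set.indicator_of_mem hb, map_apply, ← ENNReal.tsum_mul_right]
    refine tsum_congr fun a => ?_
    split_ifs with hab
    · rw [filter_apply, Set.indicator_of_mem (by rwa [Set.mem_preimage, ← hab])]
    · rw [zero_mul]
  · rw [Set.indicator_of_notMem hb, zero_mul, ENNReal.tsum_eq_zero]
    intro a
    split_ifs with hab
    · exact filter_apply_eq_zero_of_notMem _ (by rwa [Set.mem_preimage, ← hab])
    · rfl

theorem map_filter_preimage_eq_of_map_eq {p q : PMF α} {f : α → β} (hpq : p.map f = q.map f)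
    (s : Set β) (hp : ∃ a ∈ f ⁻¹' s, a ∈ p.support) (hq : ∃ a ∈ f ⁻¹' s, a ∈ q.support) :
    (p.filter (f ⁻¹' s) hp).map f = (q.filter (f ⁻¹' s) hq).map f := by
  rw [map_filter_preimage, map_filter_preimage]
  congr 1

end PMF

theorem marg_filter_map_eq_of_marg_eq {κ κ' : Type} {p q : PMF (κ → Bit)} {T : Finset κ}
    (hpq : marg p T = marg q T) {i : κ} (hi : i ∈ T) (Y : Bit)
    (hp : ∃ y ∈ {y : κ → Bit | y i = Y}, y ∈ p.support)
    (hq : ∃ y ∈ {y : κ → Bit | y i = Y}, y ∈ q.support) (e : κ' → κ) (he : ∀ t, e t ∈ T) :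
    (p.filter {y | y i = Y} hp).map (fun y t => y (e t))
      = (q.filter {y | y i = Y} hq).map (fun y t => y (e t)) := by
  have hcond := PMF.map_filter_preimage_eq_of_map_eq hpq {w | w ⟨i, hi⟩ = Y} hp hq
  have hfactor : ∀ r : PMF (κ → Bit), r.map (fun y t => y (e t))
      = (r.map fun y (t : T) => y t).map fun w t => w ⟨e t, he t⟩ := fun r => by
    rw [PMF.map_comp]; rfl
  rw [hfactor, hfactor]
  exact congrArg _ hcond

theorem NoSignaling.filter_map {ι ι' κ κ' : Type} [Fintype κ] [Fintype κ']
    {𝒩 : Channel ι κ} {B : κ → Option ι} (hNS : NoSignaling 𝒩 B) (i : κ) (Y : Bit)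
    (φ : (ι' → Bit) → ι → Bit) (e : κ' → κ) (B' : κ' → Option ι')
    (hsupp : ∀ z, ∃ y ∈ {y : κ → Bit | y i = Y}, y ∈ (𝒩 (φ z)).support)
    (S : Finset ι' → Finset ι) (hi : ∀ S', i ∈ preim B (S S'))
    (he : ∀ S', ∀ ℓ ∈ preim B' S', e ℓ ∈ preim B (S S'))
    (hφ : ∀ S' (z z' : ι' → Bit), (∀ a ∈ S', z a = z' a) → ∀ a ∈ S S', φ z a = φ z' a) :
    NoSignaling (fun z => ((𝒩 (φ z)).filter {y | y i = Y} (hsupp z)).map fun y ℓ => y (e ℓ))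
      B' := by
  intro S' z z' hzz'
  simp only [marg, PMF.map_comp]
  exact marg_filter_map_eq_of_marg_eq (hNS _ _ _ (hφ S' z z' hzz')) (hi S') Y _ _ _
    fun t => he S' t t.2

theorem preim_bind_subset_preim_insert {ι κ : Type} [Fintype κ] [DecidableEq ι]
    (B : κ → Option ι) (j : ι) (S' : Finset {a // a ≠ j}) :
    preim (fun ℓ => (B ℓ).bind fun a => if h : a = j then none else some ⟨a, h⟩) S'
      ⊆ preim B (insert j (S'.map (Function.Embedding.subtype _))) := by
  intro ℓ hℓ
  simp only [preim, Finset.mem_filter, Finset.mem_univ, true_and] at hℓ ⊢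
  intro a hBa
  by_cases haj : a = j
  · rw [haj]; exact Finset.mem_insert_self _ _
  · exact Finset.mem_insert_of_mem (Finset.mem_map_of_mem _ (hℓ ⟨a, haj⟩ (by simp [hBa, haj])))

theorem extendAt_eq_extendAt_of_eqOn {n : ℕ} {j : Fin n} (X : Bit) {S' : Finset {a // a ≠ j}}
    {z z' : {a // a ≠ j} → Bit} (h : ∀ a ∈ S', z a = z' a) :
    ∀ a ∈ insert j (S'.map (Function.Embedding.subtype _)),
      extendAt j X z a = extendAt j X z' a := by
  intro a ha
  rcases Finset.mem_insert.1 ha with rfl | ha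
  · simp [extendAt]
  · obtain ⟨b, hb, rfl⟩ := Finset.mem_map.1 ha
    simp [extendAt, b.2, h b hb]

/-- (Corollary 3.)  Conditioning a no-signaling channel on the value `Y` of a single
output coordinate `i` — and, if `B i = some j`, also fixing the input coordinate `j`
to `X` — yields a no-signaling channel on the remaining coordinates, with the backwards
lightcone function `B'` sending `ℓ` to `⊥` if `B ℓ = B i` and to `B ℓ` otherwise. -/
theorem nsc_conditioning {n N : ℕ}
    (𝒩 : Channel (Fin n) (Fin N)) (B : Fin N → Option (Fin n))
    (hNS : NoSignaling 𝒩 B) (i : Fin N) (Y : Bit) :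
    (∀ (_ : B i = none)
        (hsup : ∀ x : Fin n → Bit, Y ∈ ((𝒩 x).map fun y => y i).support),
      NoSignaling (ι := Fin n) (κ := {ℓ : Fin N // ℓ ≠ i})
        (fun x => ((𝒩 x).filter {y | y i = Y} (filter_ex (𝒩 x) i Y (hsup x))).map
          fun y ℓ => y ℓ.1)
        (fun ℓ => B ℓ.1))
    ∧ (∀ (j : Fin n) (X : Bit) (_ : B i = some j)
        (hsup : ∀ x : Fin n → Bit, x j = X → Y ∈ ((𝒩 x).map fun y => y i).support),
      NoSignaling (ι := {a : Fin n // a ≠ j}) (κ := {ℓ : Fin N // ℓ ≠ i})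
        (fun z => ((𝒩 (extendAt j X z)).filter {y | y i = Y}
            (filter_ex (𝒩 (extendAt j X z)) i Y
              (hsup (extendAt j X z) (by simp [extendAt])))).map
          fun y ℓ => y ℓ.1)
        (fun ℓ => (B ℓ.1).bind fun a => if h : a = j then none else some ⟨a, h⟩)) := by
  constructor
  · intro hBi _
    exact hNS.filter_map i Y id Subtype.val _ _ id (fun _ => by simp [preim, hBi])
      (fun _ _ hℓ => by simpa [preim] using hℓ) (fun _ _ _ h => h)
  · intro j X hBi _
    exact hNS.filter_map i Y (extendAt j X) Subtype.val _ _
      (fun S => insert j (S.map (Function.Embedding.subtype _))) (fun _ => by simp [preim, hBi])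
      (fun S _ hℓ => preim_bind_subset_preim_insert B j S (by simpa [preim] using hℓ))
      (fun _ _ _ => extendAt_eq_extendAt_of_eqOn X)
end

section
/- Let (𝒩, B) be a no-signaling channel from n bits to N bits with n ≥ 1, let R = B^{−1}(⊥) be the set of 'referee' output coordinates, let f : {−1,1}^N → {−1,1}, and let ε ≥ 0. Note that the reduced channel 𝒩^R(x) is the same distribution for every input x. If |E_x[E_{y∼𝒩(x)}[f(y)] · Par_n(x)]| ≥ ε, then there exists an outcome r ∈ {−1,1}^R in the support of 𝒩^R such that, writing 𝒩_r(x) := 𝒩^{[N]∖R}(x | y_R = r) for the conditioned channel and f_r : {−1,1}^{[N]∖R} → {−1,1} for the restriction f_r(y') := f(y' with the coordinates in R set to r), one has |E_x[E_{y'∼𝒩_r(x)}[f_r(y')] · Par_n(x)]| ≥ ε. (Expectations over x are with respect to the uniform distribution on {−1,1}^n, and Par_n(x) := ∏_{i=1}^n x_i.) -/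
open scoped Classical ENNReal

noncomputable section

/-- Reduced conditional channel value: the marginal on `T` of `p` conditioned on the
event `y_J = Y`. -/
def condMarg {κ : Type} (p : PMF (κ → Bit)) (J T : Finset κ) (Y : {j // j ∈ J} → Bit)
    (h : Y ∈ (marg p J).support) : PMF ({i // i ∈ T} → Bit) :=
  marg (p.filter {y | ∀ j : {j // j ∈ J}, y j.1 = Y j} (by
    rw [marg, PMF.support_map] at h
    obtain ⟨y, hy, rfl⟩ := h
    exact ⟨y, fun j => rfl, hy⟩)) T

/-- Expectation of a real-valued function under a `PMF` on a finite type. -/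
def pexp {α : Type} [Fintype α] (p : PMF α) (f : α → ℝ) : ℝ :=
  ∑ a, (p a).toReal * f a

/-- The referee output coordinates `R = B⁻¹(⊥)`. -/
def refSet {n N : ℕ} (B : Fin N → Option (Fin n)) : Finset (Fin N) :=
  Finset.univ.filter fun ℓ => B ℓ = none

end


noncomputable section Aux

private lemma pexp_marg {N : ℕ} (p : PMF (Fin N → Bit)) (T : Finset (Fin N))
    (g : ({i // i ∈ T} → Bit) → ℝ) :
    pexp (marg p T) g = ∑ y : Fin N → Bit, (p y).toReal * g (fun i => y i.1) := by
  unfold pexp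
  have h1 : ∀ y' : {i // i ∈ T} → Bit, ((marg p T) y').toReal
      = ∑ y : Fin N → Bit, if y' = (fun i : {i // i ∈ T} => y i.1) then (p y).toReal else 0 := by
    intro y'
    rw [marg, PMF.map_apply, tsum_fintype, ENNReal.toReal_sum]
    · exact Finset.sum_congr rfl fun y _ => by split <;> simp
    · intro y _; split
      · exact PMF.apply_ne_top p y
      · exact ENNReal.zero_ne_top
  simp only [h1, Finset.sum_mul, ite_mul, zero_mul]
  rw [Finset.sum_comm]
  refine Finset.sum_congr rfl fun y _ => ?_
  rw [Finset.sum_ite_eq']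
  simp

private lemma mem_cyl_iff {N : ℕ} (J : Finset (Fin N)) (Y : {j // j ∈ J} → Bit)
    (y : Fin N → Bit) :
    y ∈ ({y | ∀ j : {j // j ∈ J}, y j.1 = Y j} : Set (Fin N → Bit))
      ↔ (fun j : {j // j ∈ J} => y j.1) = Y :=
  ⟨fun h => funext h, fun h j => congrFun h j⟩

private lemma tsum_indicator_eq_marg {N : ℕ} (p : PMF (Fin N → Bit)) (J : Finset (Fin N))
    (Y : {j // j ∈ J} → Bit) :
    (∑' y : Fin N → Bit,
        ({y | ∀ j : {j // j ∈ J}, y j.1 = Y j} : Set (Fin N → Bit)).indicator (⇑p) y)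
      = marg p J Y := by
  rw [marg, PMF.map_apply, tsum_fintype, tsum_fintype]
  refine Finset.sum_congr rfl fun y _ => ?_
  rw [Set.indicator_apply]
  by_cases hy : (fun j : {j // j ∈ J} => y j.1) = Y
  · rw [if_pos ((mem_cyl_iff J Y y).mpr hy), if_pos hy.symm]
  · rw [if_neg (fun h => hy ((mem_cyl_iff J Y y).mp h)), if_neg (fun h => hy h.symm)]

private lemma condMarg_mul {N : ℕ} (p : PMF (Fin N → Bit)) (J : Finset (Fin N))
    (Y : {j // j ∈ J} → Bit) (h : Y ∈ (marg p J).support)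
    (g : ({i // i ∈ Jᶜ} → Bit) → ℝ) :
    ((marg p J) Y).toReal * pexp (condMarg p J Jᶜ Y h) g
      = ∑ y : Fin N → Bit, if (fun j : {j // j ∈ J} => y j.1) = Y
          then (p y).toReal * g (fun i => y i.1) else 0 := by
  rw [condMarg, pexp_marg]
  have hMne : (marg p J) Y ≠ 0 := h
  have hMnetop : (marg p J) Y ≠ ⊤ := PMF.apply_ne_top _ _
  have hMr : ((marg p J) Y).toReal ≠ 0 := ENNReal.toReal_ne_zero.mpr ⟨hMne, hMnetop⟩
  rw [Finset.mul_sum]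
  refine Finset.sum_congr rfl fun y _ => ?_
  rw [PMF.filter_apply, tsum_indicator_eq_marg, ENNReal.toReal_mul, Set.indicator_apply]
  by_cases hy : (fun j : {j // j ∈ J} => y j.1) = Y
  · rw [if_pos ((mem_cyl_iff J Y y).mpr hy), if_pos hy, ENNReal.toReal_inv]
    field_simp
  · rw [if_neg (fun hc => hy ((mem_cyl_iff J Y y).mp hc)), if_neg hy]
    simp

private lemma pexp_decompose {N : ℕ} (p : PMF (Fin N → Bit)) (J : Finset (Fin N))
    (F : (Fin N → Bit) → ℝ) :
    pexp p F = ∑ Y : {j // j ∈ J} → Bit, ((marg p J) Y).toReal *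
      (if h : Y ∈ (marg p J).support then
        pexp (condMarg p J Jᶜ Y h)
          (fun y' => F (fun ℓ => if hl : ℓ ∈ J then Y ⟨ℓ, hl⟩
            else y' ⟨ℓ, Finset.mem_compl.mpr hl⟩))
       else 0) := by
  have key : ∀ Y : {j // j ∈ J} → Bit, ((marg p J) Y).toReal *
      (if h : Y ∈ (marg p J).support then
        pexp (condMarg p J Jᶜ Y h)
          (fun y' => F (fun ℓ => if hl : ℓ ∈ J then Y ⟨ℓ, hl⟩
            else y' ⟨ℓ, Finset.mem_compl.mpr hl⟩))
       else 0)
      = ∑ y : Fin N → Bit, if (fun j : {j // j ∈ J} => y j.1) = Y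
          then (p y).toReal * F y else 0 := by
    intro Y
    by_cases h : Y ∈ (marg p J).support
    · rw [dif_pos h, condMarg_mul]
      refine Finset.sum_congr rfl fun y _ => ?_
      by_cases hy : (fun j : {j // j ∈ J} => y j.1) = Y
      · rw [if_pos hy, if_pos hy]
        congr 2
        funext ℓ
        by_cases hl : ℓ ∈ J
        · rw [dif_pos hl]; exact (congrFun hy ⟨ℓ, hl⟩).symm
        · rw [dif_neg hl]
      · rw [if_neg hy, if_neg hy]
    · rw [dif_neg h]
      have h0 : (marg p J) Y = 0 := by
        simpa [PMF.mem_support_iff] using h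
      rw [h0]
      rw [ENNReal.toReal_zero, zero_mul]
      symm
      refine Finset.sum_eq_zero fun y _ => ?_
      split_ifs with hy
      · have hp : p y = 0 := by
          by_contra hne
          exact h (by rw [marg, PMF.support_map]; exact ⟨y, hne, hy⟩)
        simp [hp]
      · rfl
  simp only [key]
  rw [Finset.sum_comm]
  unfold pexp
  refine Finset.sum_congr rfl fun y _ => ?_
  rw [Finset.sum_ite_eq]
  simp

private lemma preim_empty {n N : ℕ} (B : Fin N → Option (Fin n)) : preim B ∅ = refSet B := by
  ext ℓ
  simp only [preim, refSet, Finset.mem_filter, Finset.mem_univ, true_and]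
  cases h : B ℓ <;> simp [h]

end Aux

/-- (Referee-fixing step in the proof of Theorem 3.)  If `(𝒩, B)` is a no-signaling
channel whose composition with `f` has correlation at least `ε` (in magnitude) with
parity, then there is an outcome `r` of the referee coordinates `R = B⁻¹(⊥)` — an outcome
of the reduced channel `𝒩^R`, whose distribution (and hence support) is the same for
every input — such that conditioning on `y_R = r` and restricting `f` accordingly still
yields correlation at least `ε` in magnitude with parity. -/
theorem referee_fixing {n N : ℕ} (hn : 1 ≤ n)
    (𝒩 : Channel (Fin n) (Fin N)) (B : Fin N → Option (Fin n))
    (hNS : NoSignaling 𝒩 B) (f : (Fin N → Bit) → Bit) (ε : ℝ) (hε : 0 ≤ ε)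
    (hcorr : ε ≤ |(∑ x : Fin n → Bit,
        pexp (𝒩 x) (fun y => ((f y : ℤ) : ℝ)) * ∏ i, ((x i : ℤ) : ℝ)) / 2 ^ n|) :
    ∃ (r : {ℓ // ℓ ∈ refSet B} → Bit)
      (hr : ∀ x : Fin n → Bit, r ∈ (marg (𝒩 x) (refSet B)).support),
      ε ≤ |(∑ x : Fin n → Bit,
          pexp (condMarg (𝒩 x) (refSet B) (refSet B)ᶜ r (hr x))
            (fun y' => ((f (fun ℓ => if h : ℓ ∈ refSet B then r ⟨ℓ, h⟩
              else y' ⟨ℓ, Finset.mem_compl.mpr h⟩) : ℤ) : ℝ))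
          * ∏ i, ((x i : ℤ) : ℝ)) / 2 ^ n| := by
  classical
  have hq : ∀ x : Fin n → Bit, marg (𝒩 x) (refSet B) = marg (𝒩 (fun _ => 1)) (refSet B) := by
    intro x
    have h := hNS ∅ x (fun _ => 1) (by simp)
    rwa [preim_empty] at h
  set q := marg (𝒩 (fun _ => 1)) (refSet B) with hqdef
  set D : (Fin n → Bit) → ({ℓ // ℓ ∈ refSet B} → Bit) → ℝ := fun x Y =>
    if h : Y ∈ (marg (𝒩 x) (refSet B)).support then
      pexp (condMarg (𝒩 x) (refSet B) (refSet B)ᶜ Y h)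
        (fun y' => ((f (fun ℓ => if h : ℓ ∈ refSet B then Y ⟨ℓ, h⟩
          else y' ⟨ℓ, Finset.mem_compl.mpr h⟩) : ℤ) : ℝ))
    else 0 with hD
  have hdec : ∀ x : Fin n → Bit, pexp (𝒩 x) (fun y => ((f y : ℤ) : ℝ))
      = ∑ Y : {ℓ // ℓ ∈ refSet B} → Bit, (q Y).toReal * D x Y := by
    intro x
    rw [pexp_decompose (𝒩 x) (refSet B)]
    refine Finset.sum_congr rfl fun Y _ => ?_
    simp only [hD]
    rw [DFunLike.congr_fun (hq x) Y]
  set c : ({ℓ // ℓ ∈ refSet B} → Bit) → ℝ :=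
    fun Y => (∑ x : Fin n → Bit, D x Y * ∏ i, ((x i : ℤ) : ℝ)) / 2 ^ n with hc
  have hC : (∑ x : Fin n → Bit,
        pexp (𝒩 x) (fun y => ((f y : ℤ) : ℝ)) * ∏ i, ((x i : ℤ) : ℝ)) / 2 ^ n
      = ∑ Y : {ℓ // ℓ ∈ refSet B} → Bit, (q Y).toReal * c Y := by
    simp only [hdec, Finset.sum_mul, mul_assoc]
    rw [Finset.sum_comm, Finset.sum_div]
    refine Finset.sum_congr rfl fun Y _ => ?_
    simp only [hc]
    rw [← Finset.mul_sum, mul_div_assoc]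
  have hw : ∑ Y : {ℓ // ℓ ∈ refSet B} → Bit, (q Y).toReal = 1 := by
    have h1 := q.tsum_coe
    rw [tsum_fintype] at h1
    rw [← ENNReal.toReal_sum (fun Y _ => PMF.apply_ne_top _ _), h1, ENNReal.toReal_one]
  have htri : |∑ Y : {ℓ // ℓ ∈ refSet B} → Bit, (q Y).toReal * c Y|
      ≤ ∑ Y : {ℓ // ℓ ∈ refSet B} → Bit, (q Y).toReal * |c Y| := by
    refine (Finset.abs_sum_le_sum_abs _ _).trans (Finset.sum_le_sum fun Y _ => ?_)
    rw [abs_mul, abs_of_nonneg ENNReal.toReal_nonneg]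
  have hmain : ∃ Y, Y ∈ q.support ∧ ε ≤ |c Y| := by
    by_contra hcon
    push_neg at hcon
    obtain ⟨Y₀, hY₀⟩ := q.support_nonempty
    have hlt : ∑ Y : {ℓ // ℓ ∈ refSet B} → Bit, (q Y).toReal * |c Y|
        < ∑ Y : {ℓ // ℓ ∈ refSet B} → Bit, (q Y).toReal * ε := by
      refine Finset.sum_lt_sum (fun Y _ => ?_) ⟨Y₀, Finset.mem_univ _, ?_⟩
      · by_cases hY : Y ∈ q.support
        · exact mul_le_mul_of_nonneg_left (le_of_lt (hcon Y hY)) ENNReal.toReal_nonneg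
        · have h0 : q Y = 0 := by simpa [PMF.mem_support_iff] using hY
          simp [h0]
      · exact mul_lt_mul_of_pos_left (hcon Y₀ hY₀)
          (ENNReal.toReal_pos hY₀ (PMF.apply_ne_top _ _))
    rw [← Finset.sum_mul, hw, one_mul] at hlt
    rw [hC] at hcorr
    exact lt_irrefl ε (lt_of_le_of_lt (hcorr.trans htri) hlt)
  obtain ⟨Y, hY, hcY⟩ := hmain
  have hr : ∀ x : Fin n → Bit, Y ∈ (marg (𝒩 x) (refSet B)).support := by
    intro x; rw [hq x]; exact hY
  refine ⟨Y, hr, ?_⟩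
  have heq : (∑ x : Fin n → Bit,
      pexp (condMarg (𝒩 x) (refSet B) (refSet B)ᶜ Y (hr x))
        (fun y' => ((f (fun ℓ => if h : ℓ ∈ refSet B then Y ⟨ℓ, h⟩
          else y' ⟨ℓ, Finset.mem_compl.mpr h⟩) : ℤ) : ℝ))
      * ∏ i, ((x i : ℤ) : ℝ)) / 2 ^ n = c Y := by
    simp only [hc]
    refine congrArg (· / 2 ^ n) (Finset.sum_congr rfl fun x _ => ?_)
    simp only [hD]
    rw [dif_pos (hr x)]
  rw [heq]
  exact hcY
end
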